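/- Let r, r̂ be differentiable rewards with |r − r̂| ≤ ε and ‖∇r‖, ‖∇r̂‖ ≤ G, and additionally ‖∇r(P) − ∇r̂(P)‖ ≤ C₁ ε for all P. Define the tilted expectations s = β E_{π_r}[∇r] and ŝ = β E_{π_{r̂}}[∇r̂], where π_r (resp. π_{r̂}) is the probability measure with density proportional to exp(β r) (resp. exp(β r̂)) against a common base Gaussian measure. Then ‖ŝ − s‖ ≤ β C₁ ε + 2 β G (exp(2βε) − 1). -/
import Mathlib


open MeasureTheory Real

set_option maxHeartbeats 1600000 in
/-- Score gap of Gibbs-tilted Gaussian expectations: if `|r − r̂| ≤ ε`,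
`‖∇r‖, ‖∇r̂‖ ≤ G` and `‖∇r − ∇r̂‖ ≤ C₁ ε` pointwise, then the tilted scores
`s = β E_{π_r}[∇r]` and `ŝ = β E_{π_{r̂}}[∇r̂]` (tilting a common base Gaussian
`N(P_t, σ² I)` by `exp(β r)`, resp. `exp(β r̂)`) satisfy
`‖ŝ − s‖ ≤ β C₁ ε + 2 β G (exp(2βε) − 1)`. -/
theorem tilted_score_gap
    {d : ℕ} (Pt : EuclideanSpace ℝ (Fin d)) (σ : ℝ) (hσ : 0 < σ)
    (r rhat : EuclideanSpace ℝ (Fin d) → ℝ)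
    (hr : Differentiable ℝ r) (hrhat : Differentiable ℝ rhat)
    (β ε G C₁ : ℝ) (hβ : 0 < β) (hε : 0 ≤ ε) (hG : 0 ≤ G) (hC₁ : 0 ≤ C₁)
    (hgap : ∀ P, |r P - rhat P| ≤ ε)
    (hgradr : ∀ P, ‖gradient r P‖ ≤ G)
    (hgradrhat : ∀ P, ‖gradient rhat P‖ ≤ G)
    (hgradgap : ∀ P, ‖gradient r P - gradient rhat P‖ ≤ C₁ * ε)
    (μ : Measure (EuclideanSpace ℝ (Fin d)))
    (hμ : μ = (volume : Measure (EuclideanSpace ℝ (Fin d))).withDensity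
      (fun x => ENNReal.ofReal
        ((2 * Real.pi * σ ^ 2) ^ (-(d : ℝ) / 2) * Real.exp (-‖x - Pt‖ ^ 2 / (2 * σ ^ 2)))))
    (hint : Integrable (fun x => Real.exp (β * r x)) μ)
    (hinthat : Integrable (fun x => Real.exp (β * rhat x)) μ)
    (s shat : EuclideanSpace ℝ (Fin d))
    (hs : s = β • ((∫ x, Real.exp (β * r x) ∂μ)⁻¹ •
      ∫ x, Real.exp (β * r x) • gradient r x ∂μ))
    (hshat : shat = β • ((∫ x, Real.exp (β * rhat x) ∂μ)⁻¹ •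
      ∫ x, Real.exp (β * rhat x) • gradient rhat x ∂μ)) :
    ‖shat - s‖ ≤ β * C₁ * ε + 2 * β * G * (Real.exp (2 * β * ε) - 1) := by
  -- measurability of gradients
  have hmgr : AEStronglyMeasurable (gradient r) μ := by
    have h1 : Measurable (fderiv ℝ r) := measurable_fderiv ℝ r
    exact (((InnerProductSpace.toDual ℝ
      (EuclideanSpace ℝ (Fin d))).symm.continuous.measurable).comp h1).aestronglyMeasurable
  have hmgrhat : AEStronglyMeasurable (gradient rhat) μ := by
    have h1 : Measurable (fderiv ℝ rhat) := measurable_fderiv ℝ rhat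
    exact (((InnerProductSpace.toDual ℝ
      (EuclideanSpace ℝ (Fin d))).symm.continuous.measurable).comp h1).aestronglyMeasurable
  have hrc : Continuous fun x => Real.exp (β * r x) :=
    Real.continuous_exp.comp (continuous_const.mul hr.continuous)
  have hrhc : Continuous fun x => Real.exp (β * rhat x) :=
    Real.continuous_exp.comp (continuous_const.mul hrhat.continuous)
  -- integrability of vector integrands
  have hint1 : Integrable (fun x => Real.exp (β * r x) • gradient r x) μ := by
    refine Integrable.mono' (hint.mul_const G) (hrc.aestronglyMeasurable.smul hmgr) ?_
    filter_upwards with x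
    rw [norm_smul, Real.norm_eq_abs, abs_of_pos (Real.exp_pos _)]
    exact mul_le_mul_of_nonneg_left (hgradr x) (Real.exp_pos _).le
  have hint2 : Integrable (fun x => Real.exp (β * rhat x) • gradient rhat x) μ := by
    refine Integrable.mono' (hinthat.mul_const G) (hrhc.aestronglyMeasurable.smul hmgrhat) ?_
    filter_upwards with x
    rw [norm_smul, Real.norm_eq_abs, abs_of_pos (Real.exp_pos _)]
    exact mul_le_mul_of_nonneg_left (hgradrhat x) (Real.exp_pos _).le
  have hint3 : Integrable (fun x => Real.exp (β * rhat x) • gradient r x) μ := by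
    refine Integrable.mono' (hinthat.mul_const G) (hrhc.aestronglyMeasurable.smul hmgr) ?_
    filter_upwards with x
    rw [norm_smul, Real.norm_eq_abs, abs_of_pos (Real.exp_pos _)]
    exact mul_le_mul_of_nonneg_left (hgradr x) (Real.exp_pos _).le
  set Z := ∫ x, Real.exp (β * r x) ∂μ with hZdef
  set Zh := ∫ x, Real.exp (β * rhat x) ∂μ with hZhdef
  -- the measure is nonzero
  have hμ0 : 0 < μ Set.univ := by
    rw [hμ, withDensity_apply _ MeasurableSet.univ, Measure.restrict_univ]
    have hmf : Measurable fun x : EuclideanSpace ℝ (Fin d) => ENNReal.ofReal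
        ((2 * Real.pi * σ ^ 2) ^ (-(d : ℝ) / 2) * Real.exp (-‖x - Pt‖ ^ 2 / (2 * σ ^ 2))) := by
      apply Measurable.ennreal_ofReal
      exact (continuous_const.mul (Real.continuous_exp.comp
        (((continuous_id.sub continuous_const).norm.pow 2).neg.div_const _))).measurable
    rw [lintegral_pos_iff_support hmf]
    have hsupp : Function.support (fun x : EuclideanSpace ℝ (Fin d) => ENNReal.ofReal
        ((2 * Real.pi * σ ^ 2) ^ (-(d : ℝ) / 2) * Real.exp (-‖x - Pt‖ ^ 2 / (2 * σ ^ 2))))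
        = Set.univ := by
      ext x
      simp only [Function.mem_support, Set.mem_univ, iff_true, ne_eq,
        ENNReal.ofReal_eq_zero, not_le]
      have h2 : (0:ℝ) < 2 * Real.pi * σ ^ 2 := by positivity
      positivity
    rw [hsupp]
    exact isOpen_univ.measure_pos volume ⟨0, trivial⟩
  have hμne : μ ≠ 0 := by
    intro h
    rw [h] at hμ0
    simp at hμ0
  have hZpos : 0 < Z := by
    rw [hZdef]
    refine (integral_pos_iff_support_of_nonneg (fun x => (Real.exp_pos _).le) hint).mpr ?_
    have : Function.support (fun x : EuclideanSpace ℝ (Fin d) => Real.exp (β * r x))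
        = Set.univ := by
      ext x; simp [Function.mem_support, Real.exp_ne_zero]
    rw [this]
    exact hμ0
  have hZhpos : 0 < Zh := by
    rw [hZhdef]
    refine (integral_pos_iff_support_of_nonneg (fun x => (Real.exp_pos _).le) hinthat).mpr ?_
    have : Function.support (fun x : EuclideanSpace ℝ (Fin d) => Real.exp (β * rhat x))
        = Set.univ := by
      ext x; simp [Function.mem_support, Real.exp_ne_zero]
    rw [this]
    exact hμ0
  set a := Real.exp (β * ε) with hadef
  have ha1 : 1 ≤ a := by
    rw [hadef]; exact Real.one_le_exp (by positivity)
  have ha0 : 0 < a := lt_of_lt_of_le one_pos ha1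
  have hasq : Real.exp (2 * β * ε) = a ^ 2 := by
    rw [hadef, sq, ← Real.exp_add]
    congr 1
    ring
  -- pointwise exp comparison
  have hexle : ∀ x, Real.exp (β * r x) ≤ a * Real.exp (β * rhat x) := by
    intro x
    rw [hadef, ← Real.exp_add]
    apply Real.exp_le_exp.mpr
    have := (abs_le.mp (hgap x)).2
    nlinarith
  have hexhle : ∀ x, Real.exp (β * rhat x) ≤ a * Real.exp (β * r x) := by
    intro x
    rw [hadef, ← Real.exp_add]
    apply Real.exp_le_exp.mpr
    have := (abs_le.mp (hgap x)).1
    nlinarith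
  -- integral comparison
  have hZle : Z ≤ a * Zh := by
    rw [hZdef, hZhdef, ← integral_const_mul]
    exact integral_mono hint (hinthat.const_mul _) hexle
  have hZhle : Zh ≤ a * Z := by
    rw [hZdef, hZhdef, ← integral_const_mul]
    exact integral_mono hinthat (hint.const_mul _) hexhle
  -- pointwise weight comparison
  have hwv : ∀ x, |Zh⁻¹ * Real.exp (β * rhat x) - Z⁻¹ * Real.exp (β * r x)|
      ≤ (a ^ 2 - 1) * (Z⁻¹ * Real.exp (β * r x)) := by
    intro x
    set ex := Real.exp (β * r x) with hex
    set exh := Real.exp (β * rhat x) with hexh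
    have hex0 : 0 < ex := Real.exp_pos _
    have hexh0 : 0 < exh := Real.exp_pos _
    have h1 : exh ≤ a * ex := hexhle x
    have h2 : ex ≤ a * exh := hexle x
    rw [abs_le]
    constructor
    · -- lower bound
      rw [← sub_nonneg]
      have key : ex * Zh ≤ a ^ 2 * (exh * Z) := by
        calc ex * Zh ≤ (a * exh) * (a * Z) :=
              mul_le_mul h2 hZhle hZhpos.le (by positivity)
          _ = a ^ 2 * (exh * Z) := by ring
      have expand : Zh⁻¹ * exh - Z⁻¹ * ex - -((a ^ 2 - 1) * (Z⁻¹ * ex))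
          = ((a ^ 2 - 2) * (ex * Zh) + exh * Z) / (Z * Zh) := by
        field_simp
        ring
      rw [expand]
      apply div_nonneg _ (by positivity)
      nlinarith [mul_nonneg (sq_nonneg (a ^ 2 - 1)) (mul_nonneg hex0.le hZhpos.le),
        mul_pos ha0 ha0, key]
    · rw [sub_le_iff_le_add, inv_mul_eq_div, inv_mul_eq_div, div_le_iff₀ hZhpos]
      have key : exh * Z ≤ a ^ 2 * (ex * Zh) := by
        calc exh * Z ≤ (a * ex) * (a * Zh) :=
              mul_le_mul h1 hZle hZpos.le (by positivity)
          _ = a ^ 2 * (ex * Zh) := by ring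
      have hZZ : (0:ℝ) < Z := hZpos
      rw [← sub_nonneg]
      have expand : ((a ^ 2 - 1) * (ex / Z) + ex / Z) * Zh - exh
          = (a ^ 2 * (ex * Zh) - exh * Z) / Z := by
        field_simp
        ring
      rw [expand]
      exact div_nonneg (by linarith) hZpos.le
  -- integrability of the weighted-difference integrand
  have hint4 : Integrable (fun x => Real.exp (β * rhat x) •
      (gradient rhat x - gradient r x)) μ := by
    have : (fun x => Real.exp (β * rhat x) • (gradient rhat x - gradient r x))
        = fun x => Real.exp (β * rhat x) • gradient rhat x
          - Real.exp (β * rhat x) • gradient r x := by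
      funext x; rw [smul_sub]
    rw [this]
    exact hint2.sub hint3
  -- split identity
  set E1 := ∫ x, Real.exp (β * rhat x) • gradient rhat x ∂μ with hE1
  set E2 := ∫ x, Real.exp (β * rhat x) • gradient r x ∂μ with hE2
  set E3 := ∫ x, Real.exp (β * r x) • gradient r x ∂μ with hE3
  set IA := ∫ x, Real.exp (β * rhat x) • (gradient rhat x - gradient r x) ∂μ with hIA
  set IB := ∫ x, (Zh⁻¹ * Real.exp (β * rhat x) - Z⁻¹ * Real.exp (β * r x)) •
    gradient r x ∂μ with hIB
  have hA' : IA = E1 - E2 := by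
    rw [hIA]
    have : (fun x => Real.exp (β * rhat x) • (gradient rhat x - gradient r x))
        = fun x => Real.exp (β * rhat x) • gradient rhat x
          - Real.exp (β * rhat x) • gradient r x := by
      funext x; rw [smul_sub]
    rw [this, integral_sub hint2 hint3]
  have hB : IB = Zh⁻¹ • E2 - Z⁻¹ • E3 := by
    rw [hIB]
    have heq : (fun x => (Zh⁻¹ * Real.exp (β * rhat x) - Z⁻¹ * Real.exp (β * r x)) •
        gradient r x)
        = fun x => Zh⁻¹ • (Real.exp (β * rhat x) • gradient r x)
          - Z⁻¹ • (Real.exp (β * r x) • gradient r x) := by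
      funext x; rw [sub_smul, smul_smul, smul_smul]
    have i3 : Integrable (fun x => Zh⁻¹ • (Real.exp (β * rhat x) • gradient r x)) μ :=
      hint3.smul Zh⁻¹
    have i1 : Integrable (fun x => Z⁻¹ • (Real.exp (β * r x) • gradient r x)) μ :=
      hint1.smul Z⁻¹
    rw [heq, integral_sub i3 i1, integral_smul, integral_smul]
  have hsplit : shat - s = β • (Zh⁻¹ • IA) + β • IB := by
    rw [hs, hshat, hA', hB]
    module
  -- norm bounds
  have hnA : ‖IA‖ ≤ C₁ * ε * Zh := by
    rw [hIA]
    calc ‖∫ x, Real.exp (β * rhat x) • (gradient rhat x - gradient r x) ∂μ‖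
        ≤ ∫ x, ‖Real.exp (β * rhat x) • (gradient rhat x - gradient r x)‖ ∂μ :=
          norm_integral_le_integral_norm _
      _ ≤ ∫ x, C₁ * ε * Real.exp (β * rhat x) ∂μ := by
          apply integral_mono_of_nonneg
          · filter_upwards with x using norm_nonneg _
          · exact hinthat.const_mul _
          · filter_upwards with x
            rw [norm_smul, Real.norm_eq_abs, abs_of_pos (Real.exp_pos _)]
            have h1 : ‖gradient rhat x - gradient r x‖ ≤ C₁ * ε := by
              rw [norm_sub_rev]; exact hgradgap x
            calc Real.exp (β * rhat x) * ‖gradient rhat x - gradient r x‖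
                ≤ Real.exp (β * rhat x) * (C₁ * ε) :=
                  mul_le_mul_of_nonneg_left h1 (Real.exp_pos _).le
              _ = C₁ * ε * Real.exp (β * rhat x) := by ring
      _ = C₁ * ε * Zh := by rw [integral_const_mul]
  have hnB : ‖IB‖ ≤ (a ^ 2 - 1) * G := by
    rw [hIB]
    calc ‖∫ x, (Zh⁻¹ * Real.exp (β * rhat x) - Z⁻¹ * Real.exp (β * r x)) •
          gradient r x ∂μ‖
        ≤ ∫ x, ‖(Zh⁻¹ * Real.exp (β * rhat x) - Z⁻¹ * Real.exp (β * r x)) •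
            gradient r x‖ ∂μ := norm_integral_le_integral_norm _
      _ ≤ ∫ x, (a ^ 2 - 1) * G * (Z⁻¹ * Real.exp (β * r x)) ∂μ := by
          apply integral_mono_of_nonneg
          · filter_upwards with x using norm_nonneg _
          · exact (hint.const_mul _).const_mul _
          · filter_upwards with x
            rw [norm_smul, Real.norm_eq_abs]
            calc |Zh⁻¹ * Real.exp (β * rhat x) - Z⁻¹ * Real.exp (β * r x)| * ‖gradient r x‖
                ≤ ((a ^ 2 - 1) * (Z⁻¹ * Real.exp (β * r x))) * G := by
                  apply mul_le_mul (hwv x) (hgradr x) (norm_nonneg _)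
                  have h1 : (0:ℝ) ≤ a ^ 2 - 1 := by nlinarith
                  have h2 : (0:ℝ) ≤ Z⁻¹ * Real.exp (β * r x) := by positivity
                  positivity
              _ = (a ^ 2 - 1) * G * (Z⁻¹ * Real.exp (β * r x)) := by ring
      _ = (a ^ 2 - 1) * G * (Z⁻¹ * Z) := by
          rw [integral_const_mul, integral_const_mul]
      _ = (a ^ 2 - 1) * G := by
          rw [inv_mul_cancel₀ hZpos.ne']; ring
  -- assemble
  have hnorm1 : ‖β • (Zh⁻¹ • IA)‖ ≤ β * (C₁ * ε) := by
    rw [norm_smul, norm_smul, Real.norm_eq_abs, Real.norm_eq_abs,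
      abs_of_pos hβ, abs_of_pos (inv_pos.mpr hZhpos)]
    calc β * (Zh⁻¹ * ‖IA‖) ≤ β * (Zh⁻¹ * (C₁ * ε * Zh)) := by
          apply mul_le_mul_of_nonneg_left _ hβ.le
          exact mul_le_mul_of_nonneg_left hnA (inv_pos.mpr hZhpos).le
      _ = β * (C₁ * ε) := by
          field_simp
  have hnorm2 : ‖β • IB‖ ≤ β * ((a ^ 2 - 1) * G) := by
    rw [norm_smul, Real.norm_eq_abs, abs_of_pos hβ]
    exact mul_le_mul_of_nonneg_left hnB hβ.le
  have hfinal : ‖shat - s‖ ≤ β * (C₁ * ε) + β * ((a ^ 2 - 1) * G) := by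
    rw [hsplit]
    exact le_trans (norm_add_le _ _) (add_le_add hnorm1 hnorm2)
  calc ‖shat - s‖ ≤ β * (C₁ * ε) + β * ((a ^ 2 - 1) * G) := hfinal
    _ ≤ β * C₁ * ε + 2 * β * G * (Real.exp (2 * β * ε) - 1) := by
        rw [hasq]
        have h1 : (0:ℝ) ≤ a ^ 2 - 1 := by nlinarith
        nlinarith [mul_nonneg (mul_nonneg hβ.le hG) h1]
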